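/- Fix integers n, j, m ≥ 1 with j ≤ n, a composition (n_1,…,n_j) of n into j positive parts, a real α < 1, and real weights V(n,k) with V(n,j) ≠ 0. Let 1 ≤ l ≤ m and 0 ≤ x ≤ ⌊m/l⌋. Then the law of the number of new blocks of size l under the conditional Gibbs sampling formula satisfies: ∑_{w : w_l = x} Q(w) = ([(1−α)_{l−1}]^x/(x!·(l!)^x))·(m!/V(n,j))·∑_{r=0}^{⌊m/l⌋−x} ((−1)^r·[(1−α)_{l−1}]^r/(r!·(l!)^r·(m−rl−xl)!))·∑_{k=r+x}^{r+x+m−rl−xl} V(n+m,j+k)·S(m−rl−xl, k−r−x; α, −(n−jα)), where the left sum ranges over all tuples (w_1,…,w_m) of nonnegative integers with ∑_{i=1}^{m} i·w_i ≤ m and w_l = x. -/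

import Mathlib

/-- Rising factorial `(x)_n = x(x+1)⋯(x+n−1)`. -/
noncomputable def risingFac (x : ℝ) (n : ℕ) : ℝ := ∏ i ∈ Finset.range n, (x + i)

/-- Rising factorial with increment `α`: `(x)_{n↑α} = ∏_{i<n} (x + iα)`. -/
noncomputable def risingFacInc (x α : ℝ) (n : ℕ) : ℝ := ∏ i ∈ Finset.range n, (x + i * α)

/-- Falling factorial `(x)_{[n]} = x(x−1)⋯(x−n+1)`. -/
noncomputable def fallingFac (x : ℝ) (n : ℕ) : ℝ := ∏ i ∈ Finset.range n, (x - i)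

/-- Compositions of `n` into `k` positive parts, as functions `Fin k → ℕ`. -/
def compositions (n k : ℕ) : Finset (Fin k → ℕ) :=
  (Fintype.piFinset fun _ => Finset.range (n + 1)).filter
    (fun f => (∀ i, 0 < f i) ∧ ∑ i, f i = n)

/-- Tuples of `k` nonnegative integers summing to `n`. -/
def weakCompositions (n k : ℕ) : Finset (Fin k → ℕ) :=
  (Fintype.piFinset fun _ => Finset.range (n + 1)).filter (fun f => ∑ i, f i = n)

/-- Generalized (central) Stirling number
`S(n,k;α) = (n!/k!) ∑_{(n_1,…,n_k)} ∏_j (1−α)_{n_j−1}/n_j!`,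
the sum over compositions of `n` into `k` positive parts. -/
noncomputable def genStirling (α : ℝ) (n k : ℕ) : ℝ :=
  (Nat.factorial n : ℝ) / (Nat.factorial k : ℝ) *
    ∑ f ∈ compositions n k, ∏ j, risingFac (1 - α) (f j - 1) / (Nat.factorial (f j) : ℝ)

/-- Non-central generalized Stirling number
`S(n,k;α,γ) = ∑_{s=k}^n C(n,s) S(s,k;α) (−γ)_{n−s}`. -/
noncomputable def genStirlingNC (α γ : ℝ) (n k : ℕ) : ℝ :=
  ∑ s ∈ Finset.Icc k n, (n.choose s : ℝ) * genStirling α s k * risingFac (-γ) (n - s)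

/-- Vectors `(w_1,…,w_m)` of nonnegative integers with `∑ i·w_i ≤ m`,
encoded as `w : Fin m → ℕ` where index `i` represents size `i+1`. -/
def condCountVectors (m : ℕ) : Finset (Fin m → ℕ) :=
  (Fintype.piFinset fun _ => Finset.range (m + 1)).filter
    (fun w => ∑ i, (i.1 + 1) * w i ≤ m)

/-- The conditional Gibbs sampling formula
`Q(w) = m!·(V(n+m,j+k)/V(n,j))·((n−jα)_{m−s}/(m−s)!)·
∏_i [(1−α)_{i−1}]^{w_i}/((i!)^{w_i} w_i!)`, where `s = ∑ i·w_i` and `k = ∑ w_i`. -/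
noncomputable def condSampling (α : ℝ) (V : ℕ → ℕ → ℝ) (n j m : ℕ)
    (w : Fin m → ℕ) : ℝ :=
  (Nat.factorial m : ℝ) * (V (n + m) (j + ∑ i, w i) / V n j) *
    (risingFac ((n : ℝ) - j * α) (m - ∑ i, (i.1 + 1) * w i) /
      (Nat.factorial (m - ∑ i, (i.1 + 1) * w i) : ℝ)) *
    ∏ i, (risingFac (1 - α) i.1) ^ (w i) /
      ((Nat.factorial (i.1 + 1) : ℝ) ^ (w i) * (Nat.factorial (w i) : ℝ))

/-!
Write `Q(w)` as a factor depending only on `k = ∑ w_i` and `s = ∑ i w_i`, times the exponential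
weight `∏ c_i^{w_i} / w_i!` with `c_i = (1-α)_{i-1} / i!`. Reading the coefficient of `X^s` in
`(∑ c_i X^i)^k` once as a sum over compositions and once through the multinomial theorem gives
`S(s,k;α) = s! ∑_{w : ∑ i w_i = s, ∑ w_i = k} ∏ c_i^{w_i} / w_i!`; hence the inner sum over `k` on the
right is `M!` times the total mass `G(M, r + x)` of all vectors with `∑ i w_i ≤ M = m - (r+x) l`.
Splitting `G` according to `w_l = q` pulls out `c_l^q / q!`, so the right side becomes
`∑_r (-c_l)^r / r! ∑_q c_l^q / q! H(r + q)`, where `H(t)` is the mass of the vectors with `w_l = 0`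
carrying `t` extra blocks of size `l`. Since `(-c_l + c_l)^t = 0` for `t > 0`, only `H(0)` survives,
and that is the left side with its `x` blocks of size `l` removed.
-/

open Finset Polynomial
open scoped Nat

namespace GibbsSampling

variable {m : ℕ}

def totalSize (w : Fin m → ℕ) : ℕ := ∑ i, (i.1 + 1) * w i

def numBlocks (w : Fin m → ℕ) : ℕ := ∑ i, w i

def countVectors (m N : ℕ) : Finset (Fin m → ℕ) :=
  (Fintype.piFinset fun _ => range (N + 1)).filter fun w => totalSize w ≤ N

noncomputable def expWeight (g : ℕ → ℝ) (w : Fin m → ℕ) : ℝ :=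
  ∏ i, g (i.1 + 1) ^ w i / ((w i)! : ℝ)

noncomputable def blockWeight (α : ℝ) (c : ℕ) : ℝ := risingFac (1 - α) (c - 1) / (c ! : ℝ)

noncomputable def gibbsMass (β : ℝ) (Φ g : ℕ → ℝ) (S : Finset (Fin m → ℕ)) (M c : ℕ) : ℝ :=
  ∑ w ∈ S, Φ (c + numBlocks w) * (risingFac β (M - totalSize w) / ((M - totalSize w)! : ℝ)) *
    expWeight g w

lemma le_totalSize (w : Fin m → ℕ) (i : Fin m) : (i.1 + 1) * w i ≤ totalSize w :=
  single_le_sum (f := fun i => (i.1 + 1) * w i) (fun _ _ => Nat.zero_le _) (mem_univ i)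

lemma numBlocks_le_totalSize (w : Fin m → ℕ) : numBlocks w ≤ totalSize w :=
  sum_le_sum fun i _ => Nat.le_mul_of_pos_left _ i.1.succ_pos

lemma mem_countVectors {N : ℕ} {w : Fin m → ℕ} : w ∈ countVectors m N ↔ totalSize w ≤ N := by
  refine ⟨fun h => (mem_filter.1 h).2, fun h => mem_filter.2 ⟨?_, h⟩⟩
  simp only [Fintype.mem_piFinset, mem_range, Nat.lt_succ_iff]
  exact fun i => (Nat.le_mul_of_pos_left _ i.1.succ_pos).trans ((le_totalSize w i).trans h)

lemma sum_apply_update_add {M : Type*} [AddCommMonoid M] (f : Fin m → ℕ → M)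
    (w : Fin m → ℕ) (i : Fin m) (v : ℕ) :
    ∑ j, f j (Function.update w i v j) + f i (w i) = ∑ j, f j (w j) + f i v := by
  simp only [Function.apply_update f w i v, sum_update_of_mem (mem_univ i),
    ← add_sum_erase _ _ (mem_univ i), sdiff_singleton_eq_erase]
  ac_rfl

lemma totalSize_update (w : Fin m → ℕ) (i : Fin m) (v : ℕ) :
    totalSize (Function.update w i v) + (i.1 + 1) * w i = totalSize w + (i.1 + 1) * v :=
  sum_apply_update_add (fun j c => (j.1 + 1) * c) w i v

lemma numBlocks_update (w : Fin m → ℕ) (i : Fin m) (v : ℕ) :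
    numBlocks (Function.update w i v) + w i = numBlocks w + v :=
  sum_apply_update_add (fun _ c => c) w i v

lemma expWeight_update_of_eq_zero (g : ℕ → ℝ) {w : Fin m → ℕ} {i : Fin m} (hi : w i = 0)
    (q : ℕ) : expWeight g (Function.update w i q) = g (i.1 + 1) ^ q / (q ! : ℝ) * expWeight g w := by
  simp only [expWeight, Function.apply_update (fun (j : Fin m) c => g (j.1 + 1) ^ c / (c ! : ℝ)),
    prod_update_of_mem (mem_univ i), ← mul_prod_erase _ _ (mem_univ i), hi,
    sdiff_singleton_eq_erase]
  simp

lemma sum_filter_apply_eq {R : Type*} [AddCommMonoid R] (f : (Fin m → ℕ) → R) (i : Fin m)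
    {q N : ℕ} (hq : (i.1 + 1) * q ≤ N) :
    ∑ w ∈ (countVectors m N).filter (· i = q), f w =
      ∑ w ∈ (countVectors m (N - (i.1 + 1) * q)).filter (· i = 0), f (Function.update w i q) := by
  symm
  apply sum_nbij' (Function.update · i q) (Function.update · i 0)
  · intro w hw
    simp only [mem_filter, mem_countVectors] at hw ⊢
    have := totalSize_update w i q
    refine ⟨by omega, by simp⟩
  · intro w hw
    simp only [mem_filter, mem_countVectors] at hw ⊢
    have := totalSize_update w i 0
    refine ⟨by rw [hw.2] at this; omega, by simp⟩
  · intro w hw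
    simp only [mem_filter] at hw
    simp [← hw.2]
  · intro w hw
    simp only [mem_filter] at hw
    simp [← hw.2]
  · simp

lemma sum_countVectors_eq_sum_range {R : Type*} [AddCommMonoid R] (f : (Fin m → ℕ) → R)
    (i : Fin m) (N : ℕ) :
    ∑ w ∈ countVectors m N, f w =
      ∑ q ∈ range (N / (i.1 + 1) + 1), ∑ w ∈ (countVectors m N).filter (· i = q), f w := by
  refine (sum_fiberwise_of_maps_to (fun w hw => ?_) f).symm
  rw [mem_range, Nat.lt_succ_iff, Nat.le_div_iff_mul_le i.1.succ_pos, mul_comm]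
  exact (le_totalSize w i).trans (mem_countVectors.1 hw)

lemma gibbsMass_filter_apply_eq (β : ℝ) (Φ g : ℕ → ℝ) (i : Fin m) {q N : ℕ}
    (hq : (i.1 + 1) * q ≤ N) (c : ℕ) :
    gibbsMass β Φ g ((countVectors m N).filter (· i = q)) N c =
      g (i.1 + 1) ^ q / (q ! : ℝ) *
        gibbsMass β Φ g ((countVectors m (N - (i.1 + 1) * q)).filter (· i = 0))
          (N - (i.1 + 1) * q) (c + q) := by
  rw [gibbsMass, sum_filter_apply_eq _ i hq, gibbsMass, mul_sum]
  refine sum_congr rfl fun w hw => ?_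
  obtain ⟨hwN, hwi⟩ := mem_filter.1 hw
  have hk := numBlocks_update w i q
  have hs := totalSize_update w i q
  rw [hwi, add_zero] at hk
  rw [hwi, mul_zero, add_zero] at hs
  rw [expWeight_update_of_eq_zero g hwi, hk, hs, add_comm _ q, ← add_assoc, Nat.sub_sub,
    add_comm (totalSize w)]
  ring

lemma gibbsMass_countVectors_eq_sum_range (β : ℝ) (Φ g : ℕ → ℝ) (i : Fin m) (N c : ℕ) :
    gibbsMass β Φ g (countVectors m N) N c =
      ∑ q ∈ range (N / (i.1 + 1) + 1), g (i.1 + 1) ^ q / (q ! : ℝ) *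
        gibbsMass β Φ g ((countVectors m (N - (i.1 + 1) * q)).filter (· i = 0))
          (N - (i.1 + 1) * q) (c + q) := by
  rw [gibbsMass, sum_countVectors_eq_sum_range _ i]
  refine sum_congr rfl fun q hq => ?_
  rw [← gibbsMass_filter_apply_eq β Φ g i _ c, gibbsMass]
  rw [mem_range, Nat.lt_succ_iff, Nat.le_div_iff_mul_le i.1.succ_pos] at hq
  linarith

lemma mem_compositions {n k : ℕ} {f : Fin k → ℕ} :
    f ∈ compositions n k ↔ (∀ i, 0 < f i) ∧ ∑ i, f i = n := by
  refine ⟨fun h => (mem_filter.1 h).2, fun h => mem_filter.2 ⟨?_, h⟩⟩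
  simp only [Fintype.mem_piFinset, mem_range, Nat.lt_succ_iff]
  exact fun i => h.2 ▸ single_le_sum (fun _ _ => Nat.zero_le _) (mem_univ i)

lemma prod_C_mul_X_pow {R ι : Type*} [CommSemiring R] [Fintype ι] (c : ι → R) (e : ι → ℕ) :
    ∏ i, C (c i) * X ^ e i = C (∏ i, c i) * X ^ (∑ i, e i) := by
  rw [prod_mul_distrib, map_prod, prod_pow_eq_pow_sum]

lemma coeff_pow_eq_sum_compositions (g : ℕ → ℝ) {n : ℕ} (hn : n ≤ m) (k : ℕ) :
    ((∑ i : Fin m, C (g (i.1 + 1)) * X ^ (i.1 + 1)) ^ k).coeff n =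
      ∑ f ∈ compositions n k, ∏ j, g (f j) := by
  simp only [Fintype.sum_pow, prod_C_mul_X_pow, finsetSum_coeff, coeff_C_mul_X_pow]
  rw [← sum_filter]
  refine sum_nbij (fun p j => (p j).1 + 1) (fun p hp => ?_) (fun p _ q _ hpq => ?_)
    (fun f hf => ?_) fun _ _ => rfl
  · exact mem_compositions.2 ⟨fun _ => Nat.succ_pos _, ((mem_filter.1 hp).2).symm⟩
  · funext j
    exact Fin.ext (by simpa using congrFun hpq j)
  · obtain ⟨hpos, hsum⟩ := mem_compositions.1 (mem_coe.1 hf)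
    have hle : ∀ j, f j ≤ n := fun j => hsum ▸ single_le_sum (fun _ _ => Nat.zero_le _) (mem_univ j)
    refine ⟨fun j => ⟨f j - 1, by have := hpos j; have := hle j; omega⟩, ?_, ?_⟩
    · refine mem_filter.2 ⟨mem_univ _, hsum.symm.trans (sum_congr rfl fun j _ => ?_)⟩
      have := hpos j
      simp only
      omega
    · funext j
      have := hpos j
      simp only
      omega

lemma coeff_pow_eq_sum_countVectors (g : ℕ → ℝ) {n N : ℕ} (hn : n ≤ N) (k : ℕ) :
    ((∑ i : Fin m, C (g (i.1 + 1)) * X ^ (i.1 + 1)) ^ k).coeff n =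
      k ! * ∑ w ∈ (countVectors m N).filter (fun w => totalSize w = n ∧ numBlocks w = k),
        expWeight g w := by
  simp only [sum_pow_eq_sum_piAntidiag, mul_pow, ← C_pow, ← pow_mul, prod_C_mul_X_pow,
    finsetSum_coeff, ← C_eq_natCast, ← mul_assoc, ← C_mul, coeff_C_mul_X_pow]
  rw [← sum_filter, mul_sum]
  refine sum_congr ?_ fun w hw => ?_
  · ext w
    rw [mem_filter, mem_filter, mem_piAntidiag, mem_countVectors]
    simp only [mem_univ, implies_true, and_true, totalSize, numBlocks]
    grind
  · obtain ⟨-, -, hk⟩ := mem_filter.1 hw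
    have hspec : (∏ i, ((w i)! : ℝ)) * Nat.multinomial univ w = (k ! : ℝ) := by
      rw [← hk]
      exact_mod_cast Nat.multinomial_spec univ w
    have hprod : (∏ i, ((w i)! : ℝ)) ≠ 0 :=
      prod_ne_zero_iff.2 fun i _ => Nat.cast_ne_zero.2 (w i).factorial_ne_zero
    rw [expWeight, prod_div_distrib, ← hspec]
    field_simp

lemma sum_compositions_prod (g : ℕ → ℝ) {n N : ℕ} (hn : n ≤ m) (hN : n ≤ N) (k : ℕ) :
    ∑ f ∈ compositions n k, ∏ j, g (f j) =
      k ! * ∑ w ∈ (countVectors m N).filter (fun w => totalSize w = n ∧ numBlocks w = k),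
        expWeight g w :=
  (coeff_pow_eq_sum_compositions g hn k).symm.trans (coeff_pow_eq_sum_countVectors g hN k)

lemma genStirling_eq_factorial_mul_sum (α : ℝ) {s N : ℕ} (hs : s ≤ m) (hN : s ≤ N) (κ : ℕ) :
    genStirling α s κ =
      s ! * ∑ w ∈ (countVectors m N).filter (fun w => totalSize w = s ∧ numBlocks w = κ),
        expWeight (blockWeight α) w := by
  have hκ : (κ ! : ℝ) ≠ 0 := Nat.cast_ne_zero.2 κ.factorial_ne_zero
  rw [genStirling, show ∑ f ∈ compositions s κ, ∏ j, risingFac (1 - α) (f j - 1) / ((f j)! : ℝ)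
    = _ from sum_compositions_prod (blockWeight α) hs hN κ]
  field_simp

lemma genStirlingNC_neg_eq_sum (α β : ℝ) {M : ℕ} (hM : M ≤ m) (κ : ℕ) :
    genStirlingNC α (-β) M κ =
      M ! * ∑ s ∈ range (M + 1), risingFac β (M - s) / ((M - s)! : ℝ) *
        ∑ w ∈ (countVectors m M).filter (fun w => totalSize w = s ∧ numBlocks w = κ),
          expWeight (blockWeight α) w := by
  rw [genStirlingNC, neg_neg, mul_sum]
  have hsub : Icc κ M ⊆ range (M + 1) := fun s hs => mem_range.2 (Nat.lt_succ_of_le (mem_Icc.1 hs).2)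
  refine (sum_congr rfl fun s hs => ?_).trans (sum_subset hsub fun s hsM hs => ?_)
  · obtain ⟨-, hsM⟩ := mem_Icc.1 hs
    rw [genStirling_eq_factorial_mul_sum α (hsM.trans hM) hsM κ, Nat.cast_choose ℝ hsM]
    have : ((M - s)! : ℝ) ≠ 0 := Nat.cast_ne_zero.2 (M - s).factorial_ne_zero
    field_simp
  · rw [sum_eq_zero fun w hw => absurd (mem_filter.1 hw).2 ?_, mul_zero, mul_zero]
    rintro ⟨hws, hwκ⟩
    have := numBlocks_le_totalSize w
    simp only [mem_Icc, mem_range, not_and_or, not_le] at hs hsM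
    omega

lemma gibbsMass_countVectors_eq_sum_fibers (β : ℝ) (Φ g : ℕ → ℝ) (M c : ℕ) :
    gibbsMass β Φ g (countVectors m M) M c =
      ∑ s ∈ range (M + 1), ∑ κ ∈ range (M + 1),
        Φ (c + κ) * (risingFac β (M - s) / ((M - s)! : ℝ)) *
          ∑ w ∈ (countVectors m M).filter (fun w => totalSize w = s ∧ numBlocks w = κ),
            expWeight g w := by
  have hs : ∀ w ∈ countVectors m M, totalSize w ∈ range (M + 1) := fun w hw =>
    mem_range.2 (Nat.lt_succ_of_le (mem_countVectors.1 hw))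
  rw [gibbsMass, ← sum_fiberwise_of_maps_to hs]
  refine sum_congr rfl fun s _ => ?_
  have hκ : ∀ w ∈ (countVectors m M).filter (totalSize · = s), numBlocks w ∈ range (M + 1) :=
    fun w hw => mem_range.2 (Nat.lt_succ_of_le
      ((numBlocks_le_totalSize w).trans (mem_countVectors.1 (mem_filter.1 hw).1)))
  rw [← sum_fiberwise_of_maps_to hκ]
  refine sum_congr rfl fun κ _ => ?_
  rw [filter_filter, mul_sum]
  refine sum_congr rfl fun w hw => ?_
  obtain ⟨hws, hwκ⟩ := (mem_filter.1 hw).2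
  rw [hws, hwκ]

lemma sum_mul_genStirlingNC (α β : ℝ) (Φ : ℕ → ℝ) {M : ℕ} (hM : M ≤ m) (c : ℕ) :
    ∑ k ∈ Icc c (c + M), Φ k * genStirlingNC α (-β) M (k - c) =
      M ! * gibbsMass β Φ (blockWeight α) (countVectors m M) M c := by
  rw [gibbsMass_countVectors_eq_sum_fibers, sum_comm, mul_sum, ← Ico_add_one_right_eq_Icc,
    sum_Ico_eq_sum_range, add_assoc c M 1, Nat.add_sub_cancel_left]
  refine sum_congr rfl fun κ _ => ?_
  rw [Nat.add_sub_cancel_left, genStirlingNC_neg_eq_sum α β hM, mul_sum, mul_sum, mul_sum]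
  refine sum_congr rfl fun s _ => ?_
  ring

lemma sum_mul_genStirlingNC_eq_sum_range (α β : ℝ) (Φ : ℕ → ℝ) (i : Fin m) {l x r : ℕ}
    (hi : i.1 + 1 = l) (hxr : l * (x + r) ≤ m) :
    ∑ k ∈ Icc (r + x) (r + x + (m - l * (x + r))),
        Φ k * genStirlingNC α (-β) (m - l * (x + r)) (k - (r + x)) =
      (m - l * (x + r))! * ∑ q ∈ range (m / l - x - r + 1), blockWeight α l ^ q / (q ! : ℝ) *
        gibbsMass β Φ (blockWeight α) ((countVectors m (m - l * (x + (r + q)))).filter (· i = 0))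
          (m - l * (x + (r + q))) (x + (r + q)) := by
  subst hi
  rw [sum_mul_genStirlingNC α β Φ (Nat.sub_le _ _), gibbsMass_countVectors_eq_sum_range β Φ _ i,
    Nat.sub_mul_div, ← Nat.sub_sub]
  refine congrArg _ (sum_congr rfl fun q _ => ?_)
  rw [Nat.sub_sub _ _ (_ * q), ← mul_add, add_assoc, show r + x + q = x + (r + q) by omega]

section Exponential

variable {K : Type*} [Field K] [CharZero K]

lemma add_pow_div_factorial (x y : K) (t : ℕ) :
    ∑ r ∈ range (t + 1), x ^ r / (r ! : K) * (y ^ (t - r) / ((t - r)! : K)) =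
      (x + y) ^ t / (t ! : K) := by
  rw [add_pow, sum_div]
  refine sum_congr rfl fun r hr => ?_
  rw [Nat.cast_choose K (Nat.lt_succ_iff.1 (mem_range.1 hr))]
  have : (t ! : K) ≠ 0 := Nat.cast_ne_zero.2 t.factorial_ne_zero
  field_simp

lemma sum_range_neg_exp_mul_exp (a : K) (H : ℕ → K) (R : ℕ) :
    ∑ r ∈ range (R + 1), (-a) ^ r / (r ! : K) *
      ∑ q ∈ range (R - r + 1), a ^ q / (q ! : K) * H (r + q) = H 0 := by
  calc _ = ∑ r ∈ range (R + 1), ∑ q ∈ range (R + 1 - r),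
        (-a) ^ r / (r ! : K) * (a ^ q / (q ! : K) * H (r + q)) := by
        refine sum_congr rfl fun r hr => ?_
        rw [mul_sum, show R - r + 1 = R + 1 - r by have := mem_range.1 hr; omega]
    _ = ∑ t ∈ range (R + 1), ∑ r ∈ range (t + 1),
        (-a) ^ r / (r ! : K) * (a ^ (t - r) / ((t - r)! : K) * H (r + (t - r))) :=
        (sum_range_diag_flip _ _).symm
    _ = ∑ t ∈ range (R + 1), (-a + a) ^ t / (t ! : K) * H t := by
        refine sum_congr rfl fun t _ => ?_
        rw [← add_pow_div_factorial, sum_mul]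
        refine sum_congr rfl fun r hr => ?_
        rw [Nat.add_sub_cancel' (Nat.lt_succ_iff.1 (mem_range.1 hr))]
        ring
    _ = H 0 := by
        rw [sum_eq_single_of_mem 0 (by simp) fun t _ ht => by simp [zero_pow ht]]
        simp

end Exponential

lemma sum_condSampling (α : ℝ) (V : ℕ → ℕ → ℝ) (n j m : ℕ) (S : Finset (Fin m → ℕ)) :
    ∑ w ∈ S, condSampling α V n j m w =
      m ! / V n j * gibbsMass ((n : ℝ) - j * α) (fun k => V (n + m) (j + k)) (blockWeight α) S m 0 := by
  rw [gibbsMass, mul_sum]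
  refine sum_congr rfl fun w _ => ?_
  simp only [condSampling, expWeight, blockWeight, Nat.add_sub_cancel, div_pow, div_div, zero_add,
    totalSize, numBlocks]
  ring

end GibbsSampling

open GibbsSampling in
/-- The law of the number of new blocks of size `l` under the conditional
Gibbs sampling formula. -/
theorem condSampling_law_of_size_l (n j m : ℕ)
    (α : ℝ) (V : ℕ → ℕ → ℝ)
    (l x : ℕ) (hl : 1 ≤ l) (hlm : l ≤ m) (hx : x ≤ m / l) :
    ∑ w ∈ (condCountVectors m).filter (fun w => w ⟨l - 1, by omega⟩ = x),
        condSampling α V n j m w =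
      (risingFac (1 - α) (l - 1)) ^ x /
          ((Nat.factorial x : ℝ) * (Nat.factorial l : ℝ) ^ x) *
        ((Nat.factorial m : ℝ) / V n j) *
        ∑ r ∈ Finset.range (m / l - x + 1),
          (-1 : ℝ) ^ r * (risingFac (1 - α) (l - 1)) ^ r /
              ((Nat.factorial r : ℝ) * (Nat.factorial l : ℝ) ^ r *
                (Nat.factorial (m - r * l - x * l) : ℝ)) *
            ∑ k ∈ Finset.Icc (r + x) (r + x + (m - r * l - x * l)),
              V (n + m) (j + k) *
                genStirlingNC α (-((n : ℝ) - j * α)) (m - r * l - x * l)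
                  (k - r - x) := by
  set i : Fin m := ⟨l - 1, by omega⟩
  have hi : i.1 + 1 = l := Nat.sub_add_cancel hl
  set β := (n : ℝ) - j * α
  set Φ : ℕ → ℝ := fun k => V (n + m) (j + k)
  set a := blockWeight α l
  set H : ℕ → ℝ := fun t => gibbsMass β Φ (blockWeight α)
    ((countVectors m (m - l * (x + t))).filter (· i = 0)) (m - l * (x + t)) (x + t)
  have hxl : l * x ≤ m := by
    rw [mul_comm]; exact (Nat.le_div_iff_mul_le hl).1 hx
  have hLHS : ∑ w ∈ (condCountVectors m).filter (· i = x), condSampling α V n j m w =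
      m ! / V n j * (a ^ x / x ! * H 0) := by
    rw [sum_condSampling, show condCountVectors m = countVectors m m from rfl,
      gibbsMass_filter_apply_eq β Φ _ i (hi ▸ hxl), hi, zero_add]
    simp only [H, a, add_zero]
  have hsplit : ∀ r ∈ range (m / l - x + 1),
      (-1 : ℝ) ^ r * (risingFac (1 - α) (l - 1)) ^ r /
          ((r ! : ℝ) * (l ! : ℝ) ^ r * ((m - r * l - x * l)! : ℝ)) *
        ∑ k ∈ Icc (r + x) (r + x + (m - r * l - x * l)),
          Φ k * genStirlingNC α (-β) (m - r * l - x * l) (k - r - x) =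
      (-a) ^ r / (r ! : ℝ) * ∑ q ∈ range (m / l - x - r + 1), a ^ q / (q ! : ℝ) * H (r + q) := by
    intro r hr
    have hxr : l * (x + r) ≤ m := by
      rw [mul_comm, ← Nat.le_div_iff_mul_le hl]
      have := mem_range.1 hr
      omega
    rw [show m - r * l - x * l = m - l * (x + r) by rw [Nat.sub_sub]; ring_nf]
    simp only [Nat.sub_sub _ r x]
    rw [sum_mul_genStirlingNC_eq_sum_range α β Φ i hi hxr, neg_pow a, mul_sum, mul_sum,
      mul_sum]
    refine sum_congr rfl fun q _ => ?_
    simp only [H, a, blockWeight, div_pow]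
    field_simp
  rw [hLHS, sum_congr rfl hsplit, sum_range_neg_exp_mul_exp]
  simp only [a, blockWeight, div_pow]
  ring
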